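/- arXiv:2101.08142 — 2 statements merged into one kernel-verified Lean document; each statement's English description precedes it below -/
import Mathlib

section
/- Let G be a nonnegative, integrable, (h,m)-convex function on an interval J containing [ν, μ] and the points ν/m, μ/m, μ/m², with ν < μ, m ∈ (0,1], and h nonnegative and integrable on [0,1]. Then h(1/2) · (1/(μ-ν)) ∫_ν^μ [G(x) + m·G(x/m)] dx ≤ h(1/2) · [G(ν) + m²·G(μ/m²) + m·(G(μ/m) + G(ν/m))] · ∫_0^1 h(γ) dγ. -/
/-!
Substituting `x = (1 - t) ν + t μ`, (h,m)-convexity applied to the pair `(ν, μ / m)` bounds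
`G x` by `h (1 - t) G ν + m h t G (μ / m)`; integrating in `t` gives the right-hand
Hermite–Hadamard bound `(G ν + m G (μ / m)) ∫₀¹ h` for the mean of `G` over `[ν, μ]`.
The mean of `G (x / m)` over `[ν, μ]` is the mean of `G` over `[ν / m, μ / m]`, to which the
same bound applies; adding the two gives the theorem.
-/

open MeasureTheory Set intervalIntegral

def HMConvexOn (m : ℝ) (h G : ℝ → ℝ) (J : Set ℝ) : Prop :=
  ∀ x ∈ J, ∀ y ∈ J, ∀ γ ∈ Icc (0:ℝ) 1,
    G (γ * x + m * (1 - γ) * y) ≤ h γ * G x + m * h (1 - γ) * G y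

section Segment

variable {E : Type*} [NormedAddCommGroup E] {f : ℝ → E} {a b : ℝ}

theorem IntervalIntegrable.comp_segment (hf : IntervalIntegrable f volume a b) :
    IntervalIntegrable (fun t => f ((1 - t) * a + t * b)) volume 0 1 := by
  rcases eq_or_ne b a with rfl | hab
  · simp [← add_mul]
  have hshift := (hf.comp_add_right a).comp_mul_left (c := b - a)
  simp only [sub_self, zero_div, div_self (sub_ne_zero.mpr hab)] at hshift
  convert hshift using 3
  ring

theorem inv_sub_smul_integral_eq_integral_comp_segment [NormedSpace ℝ E] (f : ℝ → E)
    (hab : a ≠ b) :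
    (b - a)⁻¹ • ∫ x in a..b, f x = ∫ t in (0:ℝ)..1, f ((1 - t) * a + t * b) := by
  have hba : b - a ≠ 0 := sub_ne_zero.mpr hab.symm
  rw [show (fun t : ℝ => f ((1 - t) * a + t * b)) = fun t => f ((b - a) * t + a) by
    funext t; congr 1; ring, integral_comp_mul_add f hba]
  simp

end Segment

namespace HMConvexOn

variable {m : ℝ} {h G : ℝ → ℝ} {J : Set ℝ}

theorem le_segment (hG : HMConvexOn m h G J) (hm : m ≠ 0) {x y t : ℝ} (hx : x ∈ J)
    (hy : y / m ∈ J) (ht : t ∈ Icc (0:ℝ) 1) :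
    G ((1 - t) * x + t * y) ≤ h (1 - t) * G x + m * h t * G (y / m) := by
  have h1t : 1 - t ∈ Icc (0:ℝ) 1 := ⟨by linarith [ht.2], by linarith [ht.1]⟩
  have hpt : m * t * (y / m) = t * y := by field_simp
  simpa only [sub_sub_cancel, hpt] using hG x hx (y / m) hy (1 - t) h1t

theorem average_le (hG : HMConvexOn m h G J) (hm : m ≠ 0) {a b : ℝ} (hab : a ≠ b)
    (ha : a ∈ J) (hb : b / m ∈ J) (hGint : IntervalIntegrable G volume a b)
    (hhint : IntervalIntegrable h volume 0 1) :
    (b - a)⁻¹ * ∫ x in a..b, G x ≤ (G a + m * G (b / m)) * ∫ γ in (0:ℝ)..1, h γ := by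
  have hhrev : IntervalIntegrable (fun t => h (1 - t)) volume 0 1 := by
    simpa using (hhint.comp_sub_left 1).symm
  calc (b - a)⁻¹ * ∫ x in a..b, G x
      = ∫ t in (0:ℝ)..1, G ((1 - t) * a + t * b) :=
        inv_sub_smul_integral_eq_integral_comp_segment G hab
    _ ≤ ∫ t in (0:ℝ)..1, (h (1 - t) * G a + m * h t * G (b / m)) :=
        integral_mono_on zero_le_one hGint.comp_segment
          ((hhrev.mul_const _).add ((hhint.const_mul m).mul_const _))
          fun t ht => hG.le_segment hm ha hb ht
    _ = (G a + m * G (b / m)) * ∫ γ in (0:ℝ)..1, h γ := by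
        rw [integral_add (hhrev.mul_const _) ((hhint.const_mul m).mul_const _),
          intervalIntegral.integral_mul_const, intervalIntegral.integral_mul_const,
          intervalIntegral.integral_const_mul]
        simp only [integral_comp_sub_left, sub_self, sub_zero]
        ring

end HMConvexOn

theorem hm_convex_HH_right_general
    (ν μ m : ℝ) (hνμ : ν < μ) (hm : m ∈ Set.Ioc (0:ℝ) 1)
    (J : Set ℝ)
    (hJ : Set.Icc ν μ ⊆ J) (hνm : ν / m ∈ J) (hμm : μ / m ∈ J) (hμm2 : μ / m ^ 2 ∈ J)
    (h : ℝ → ℝ) (hh : ∀ γ ∈ Set.Icc (0:ℝ) 1, 0 ≤ h γ)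
    (hhint : IntervalIntegrable h MeasureTheory.volume 0 1)
    (G : ℝ → ℝ)
    (hGint : IntervalIntegrable G MeasureTheory.volume ν μ)
    (hGmint : IntervalIntegrable (fun x => G (x / m)) MeasureTheory.volume ν μ)
    (hG : ∀ x ∈ J, ∀ y ∈ J, ∀ γ ∈ Set.Icc (0:ℝ) 1,
      G (γ * x + m * (1 - γ) * y) ≤ h γ * G x + m * h (1 - γ) * G y) :
    h (1/2) * ((1 / (μ - ν)) * ∫ x in ν..μ, (G x + m * G (x / m)))
      ≤ h (1/2) * (G ν + m ^ 2 * G (μ / m ^ 2) + m * (G (μ / m) + G (ν / m)))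
          * ∫ γ in (0:ℝ)..1, h γ := by
  have hm0 : m ≠ 0 := hm.1.ne'
  have hconv : HMConvexOn m h G J := hG
  have hbound := hconv.average_le hm0 hνμ.ne (hJ ⟨le_rfl, hνμ.le⟩) hμm hGint hhint
  have hGint_scaled : IntervalIntegrable G volume (ν / m) (μ / m) := by
    simpa [mul_div_cancel_left₀ _ hm0] using hGmint.comp_mul_left (c := m)
  have hbound' := hconv.average_le hm0 (mt (div_left_inj' hm0).mp hνμ.ne) hνm
    (by rwa [div_div, ← sq]) hGint_scaled hhint
  have hrescale : (μ - ν)⁻¹ * ∫ x in ν..μ, G (x / m)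
      = (μ / m - ν / m)⁻¹ * ∫ x in ν / m..μ / m, G x := by
    rw [integral_comp_div _ hm0, smul_eq_mul, ← sub_div]
    field_simp
  rw [mul_assoc]
  refine mul_le_mul_of_nonneg_left ?_ (hh _ ⟨by norm_num, by norm_num⟩)
  rw [div_div, ← sq] at hbound'
  rw [integral_add hGint (hGmint.const_mul m), intervalIntegral.integral_const_mul, one_div,
    mul_add, mul_left_comm, hrescale]
  linarith [mul_le_mul_of_nonneg_left hbound' hm.1.le]

theorem hm_convex_HH_right
    (ν μ m : ℝ) (hνμ : ν < μ) (hm : m ∈ Set.Ioc (0:ℝ) 1)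
    (J : Set ℝ) (hJint : Set.OrdConnected J)
    (hJ : Set.Icc ν μ ⊆ J) (hνm : ν / m ∈ J) (hμm : μ / m ∈ J) (hμm2 : μ / m ^ 2 ∈ J)
    (h : ℝ → ℝ) (hh : ∀ γ ∈ Set.Icc (0:ℝ) 1, 0 ≤ h γ)
    (hhint : IntervalIntegrable h MeasureTheory.volume 0 1)
    (G : ℝ → ℝ)
    (hGnonneg : ∀ x ∈ J, 0 ≤ G x)
    (hGint : IntervalIntegrable G MeasureTheory.volume ν μ)
    (hGmint : IntervalIntegrable (fun x => G (x / m)) MeasureTheory.volume ν μ)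
    (hG : ∀ x ∈ J, ∀ y ∈ J, ∀ γ ∈ Set.Icc (0:ℝ) 1,
      G (γ * x + m * (1 - γ) * y) ≤ h γ * G x + m * h (1 - γ) * G y) :
    h (1/2) * ((1 / (μ - ν)) * ∫ x in ν..μ, (G x + m * G (x / m)))
      ≤ h (1/2) * (G ν + m ^ 2 * G (μ / m ^ 2) + m * (G (μ / m) + G (ν / m)))
          * ∫ γ in (0:ℝ)..1, h γ :=
  hm_convex_HH_right_general ν μ m hνμ hm J hJ hνm hμm hμm2 h hh hhint G hGint hGmint hG
end

section
/- Let 0 < ν < μ, m ∈ (0,1], r ≥ 1, and let W : [ν, μ] → ℝ be a continuous, nonnegative probability density symmetric about (ν+μ)/2, with the point (ν+μ)/(2m) ∈ [ν, μ]. Suppose the function x ↦ r·x^{r-1} is (h,m)-convex on [ν, μ] with h(γ) = γ. Then the r-th moment E_r(X) = ∫_ν^μ t^r W(t) dt satisfies |(ν^r + μ^r)/2 · ∫_ν^μ W(x) dx − E_r(X)| ≤ ((μ-ν)²/4) · r · ‖W‖_∞ · [ (1/3)(ν^{r-1} + μ^{r-1}) + (1/3)·m·((ν+μ)/(2m))^{r-1}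 ]. -/
/-!
By the symmetry of `W`, the left-hand side is `∫ G W` with
`G t = (ν^r + μ^r)/2 - (t^r + (ν + μ - t)^r)/2`, and `G ≥ 0` by convexity of `t ↦ t^r`, so it is
at most `sup W · ∫ G`. Now `∫ G` is the one-trapezoid error of `t ↦ t^r`, which integration by
parts turns into `∫ (t - (ν + μ)/2) g t` with `g t = r t^(r-1)`. The integrand is `≤ 0` on the left
half of `[ν, μ]`; on the right half, `m`-convexity of `g` between `μ` and `c = (ν + μ)/(2m)` (so that
`m c` is the midpoint) bounds `g` by a chord, whose integral is
`((μ - ν)/2)^2 (g μ / 3 + m g c / 6)`.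
-/

open Set intervalIntegral
open MeasureTheory (volume)

noncomputable def trapezoidGap (f : ℝ → ℝ) (a b t : ℝ) : ℝ :=
  (f a + f b) / 2 - (f t + f (a + b - t)) / 2

/-- `(h, m)`-convexity with `h γ = γ`, i.e. `m`-convexity in the sense of Toader. -/
def MConvexOn (m : ℝ) (s : Set ℝ) (g : ℝ → ℝ) : Prop :=
  ∀ x ∈ s, ∀ y ∈ s, ∀ γ ∈ Icc (0:ℝ) 1,
    g (γ * x + m * (1 - γ) * y) ≤ γ * g x + m * (1 - γ) * g y

section
variable {a b : ℝ} {f g W : ℝ → ℝ}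

theorem integral_mul_eq_integral_reflect_mul (hab : a ≤ b)
    (hW : ∀ x ∈ Icc a b, W (a + b - x) = W x) :
    ∫ t in a..b, f t * W t = ∫ t in a..b, f (a + b - t) * W t := by
  have h := integral_comp_sub_left (a := a) (b := b) (fun x => f x * W x) (a + b)
  rw [add_sub_cancel_right, add_sub_cancel_left] at h
  rw [← h]
  refine integral_congr fun x hx => ?_
  rw [uIcc_of_le hab] at hx
  simp only [hW x hx]

theorem mul_integral_sub_integral_mul_eq_integral_trapezoidGap_mul (hab : a ≤ b)
    (hf : ContinuousOn f (Icc a b)) (hWc : ContinuousOn W (Icc a b))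
    (hW : ∀ x ∈ Icc a b, W (a + b - x) = W x) :
    (f a + f b) / 2 * (∫ t in a..b, W t) - ∫ t in a..b, f t * W t
      = ∫ t in a..b, trapezoidGap f a b t * W t := by
  have hf' : ContinuousOn (fun t => f (a + b - t)) (Icc a b) :=
    hf.comp (by fun_prop) fun t ht => ⟨by linarith [ht.2], by linarith [ht.1]⟩
  have hint : ∀ g : ℝ → ℝ, ContinuousOn g (Icc a b) →
      IntervalIntegrable (fun t => g t * W t) volume a b :=
    fun g hg => (hg.mul hWc).intervalIntegrable_of_Icc hab
  calc (f a + f b) / 2 * (∫ t in a..b, W t) - ∫ t in a..b, f t * W t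
      = (f a + f b) / 2 * (∫ t in a..b, W t)
          - ((∫ t in a..b, f t * W t) + ∫ t in a..b, f (a + b - t) * W t) / 2 := by
        rw [← integral_mul_eq_integral_reflect_mul hab hW]; ring
    _ = ∫ t in a..b, trapezoidGap f a b t * W t := by
        rw [← integral_add (hint f hf) (hint _ hf'), ← integral_div,
          ← integral_const_mul, ← integral_sub ((hWc.intervalIntegrable_of_Icc hab).const_mul _)
            (((hint f hf).add (hint _ hf')).div_const 2)]
        congr 1; ext t; unfold trapezoidGap; ring

theorem integral_trapezoidGap (hab : a ≤ b) (hf : ContinuousOn f (Icc a b)) :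
    ∫ t in a..b, trapezoidGap f a b t = trapezoidal_error f 1 a b := by
  have h := mul_integral_sub_integral_mul_eq_integral_trapezoidGap_mul hab hf
    continuousOn_const (W := fun _ => 1) (fun _ _ => rfl)
  simp only [mul_one, integral_const, smul_eq_mul] at h
  rw [← h, trapezoidal_error, trapezoidal_integral_one]
  ring

theorem ConvexOn.trapezoidGap_nonneg (hf : ConvexOn ℝ (Icc a b) f) {t : ℝ} (ht : t ∈ Icc a b) :
    0 ≤ trapezoidGap f a b t := by
  rcases ht.1.eq_or_lt with rfl | hat
  · simp [trapezoidGap]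
  have hab : a < b := hat.trans_le ht.2
  have hba : b - a ≠ 0 := sub_ne_zero.2 hab.ne'
  set γ := (b - t) / (b - a)
  have hγ₀ : 0 ≤ γ := div_nonneg (by linarith [ht.2]) (by linarith)
  have hγ₁ : γ ≤ 1 := (div_le_one (by linarith)).2 (by linarith)
  have ha : a ∈ Icc a b := left_mem_Icc.2 hab.le
  have hb : b ∈ Icc a b := right_mem_Icc.2 hab.le
  have h₁ := hf.2 ha hb hγ₀ (sub_nonneg.2 hγ₁) (add_sub_cancel γ 1)
  have h₂ := hf.2 ha hb (sub_nonneg.2 hγ₁) hγ₀ (sub_add_cancel 1 γ)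
  have e₁ : γ • a + (1 - γ) • b = t := by simp only [γ, smul_eq_mul]; field_simp; ring
  have e₂ : (1 - γ) • a + γ • b = a + b - t := by simp only [γ, smul_eq_mul]; field_simp; ring
  rw [e₁] at h₁
  rw [e₂] at h₂
  simp only [smul_eq_mul] at h₁ h₂
  unfold trapezoidGap
  linarith

theorem abs_integral_mul_le_mul_integral (hab : a ≤ b) {F : ℝ → ℝ}
    (hF : ContinuousOn F (Icc a b)) (hWc : ContinuousOn W (Icc a b))
    (hF₀ : ∀ t ∈ Icc a b, 0 ≤ F t) (hW₀ : ∀ t ∈ Icc a b, 0 ≤ W t) {M : ℝ}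
    (hWM : ∀ t ∈ Icc a b, W t ≤ M) :
    |∫ t in a..b, F t * W t| ≤ M * ∫ t in a..b, F t := by
  rw [abs_of_nonneg (integral_nonneg hab fun t ht => mul_nonneg (hF₀ t ht) (hW₀ t ht)),
    ← integral_const_mul]
  refine integral_mono_on hab ((hF.mul hWc).intervalIntegrable_of_Icc hab)
    ((hF.intervalIntegrable_of_Icc hab).const_mul M) fun t ht => ?_
  rw [mul_comm M]
  exact mul_le_mul_of_nonneg_left (hWM t ht) (hF₀ t ht)

theorem trapezoidal_error_one_eq_integral_mul_deriv
    (hf : ∀ x ∈ uIcc a b, HasDerivAt f (g x) x) (hg : IntervalIntegrable g volume a b) :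
    trapezoidal_error f 1 a b = ∫ t in a..b, (t - (a + b) / 2) * g t := by
  rw [integral_mul_deriv_eq_deriv_mul (u := fun t => t - (a + b) / 2) (u' := fun _ => 1)
    (fun x _ => (hasDerivAt_id x).sub_const _) hf intervalIntegrable_const hg,
    trapezoidal_error, trapezoidal_integral_one]
  simp only [one_mul]
  ring

theorem integral_sub_mul_chord (a b A B : ℝ) (hab : a ≠ b) :
    ∫ t in a..b, (t - a) * (((t - a) * A + (b - t) * B) / (b - a))
      = (b - a) ^ 2 * (A / 3 + B / 6) := by
  have hba : b - a ≠ 0 := sub_ne_zero.2 hab.symm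
  have hpoly : ∀ t, (t - a) * (((t - a) * A + (b - t) * B) / (b - a))
      = (A - B) / (b - a) * (t - a) ^ 2 + B * (t - a) := fun t => by field_simp; ring
  simp only [hpoly]
  rw [integral_add ((by fun_prop : Continuous _).intervalIntegrable _ _)
      ((by fun_prop : Continuous _).intervalIntegrable _ _),
    integral_const_mul, integral_const_mul, integral_comp_sub_right (fun x => x ^ 2),
    integral_comp_sub_right (fun x => x)]
  simp only [integral_pow, integral_id, sub_self]
  field_simp
  ring

theorem integral_sub_midpoint_mul_le (hab : a < b) (hg : IntervalIntegrable g volume a b)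
    {A B : ℝ} (hg₀ : ∀ t ∈ Icc a ((a + b) / 2), 0 ≤ g t)
    (hchord : ∀ t ∈ Icc ((a + b) / 2) b,
      g t ≤ ((t - (a + b) / 2) * A + (b - t) * B) / ((b - a) / 2)) :
    ∫ t in a..b, (t - (a + b) / 2) * g t ≤ ((b - a) / 2) ^ 2 * (A / 3 + B / 6) := by
  obtain ⟨c, hc⟩ : ∃ c, (a + b) / 2 = c := ⟨_, rfl⟩
  have hhalf : (b - a) / 2 = b - c := by rw [← hc]; ring
  rw [hc] at hg₀ hchord ⊢
  rw [hhalf] at hchord ⊢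
  have hac : a ≤ c := by linarith
  have hcb : c ≤ b := by linarith
  have hint : ∀ {x y}, x ∈ Icc a b → y ∈ Icc a b →
      IntervalIntegrable (fun t => (t - c) * g t) volume x y := fun hx hy =>
    (hg.mono_set (uIcc_subset_uIcc (by rwa [uIcc_of_le hab.le]) (by rwa [uIcc_of_le hab.le]))
      ).continuousOn_mul (by fun_prop)
  have hleft : ∫ t in a..c, (t - c) * g t ≤ 0 := by
    simpa using integral_mono_on hac (hint ⟨le_rfl, hab.le⟩ ⟨hac, hcb⟩)
      intervalIntegrable_const
      fun t ht => mul_nonpos_of_nonpos_of_nonneg (by linarith [ht.2]) (hg₀ t ht)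
  have hright : ∫ t in c..b, (t - c) * g t ≤ (b - c) ^ 2 * (A / 3 + B / 6) := by
    rw [← integral_sub_mul_chord c b A B (by linarith)]
    refine integral_mono_on hcb (hint ⟨hac, hcb⟩ ⟨hab.le, le_rfl⟩)
      ((by fun_prop : Continuous _).intervalIntegrable _ _) fun t ht => ?_
    exact mul_le_mul_of_nonneg_left (hchord t ht) (by linarith [ht.1])
  rw [← integral_add_adjacent_intervals (hint ⟨le_rfl, hab.le⟩ ⟨hac, hcb⟩)
    (hint ⟨hac, hcb⟩ ⟨hab.le, le_rfl⟩)]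
  linarith

theorem MConvexOn.le_chord {m : ℝ} (hg : MConvexOn m (Icc a b) g) (hab : a < b) (hm : m ≠ 0)
    (hc : (a + b) / (2 * m) ∈ Icc a b) {t : ℝ} (ht : t ∈ Icc ((a + b) / 2) b) :
    g t ≤ ((t - (a + b) / 2) * g b + (b - t) * (m * g ((a + b) / (2 * m)))) / ((b - a) / 2) := by
  have hh : 0 < (b - a) / 2 := by linarith
  have hba : b - a ≠ 0 := (sub_pos.2 hab).ne'
  set γ := (t - (a + b) / 2) / ((b - a) / 2)
  have hγ : γ ∈ Icc (0:ℝ) 1 :=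
    ⟨div_nonneg (by linarith [ht.1]) hh.le, (div_le_one hh).2 (by linarith [ht.2])⟩
  have ht' : γ * b + m * (1 - γ) * ((a + b) / (2 * m)) = t := by
    simp only [γ]; field_simp; ring
  have key := hg b (right_mem_Icc.2 hab.le) _ hc γ hγ
  rw [ht'] at key
  calc _ ≤ _ := key
    _ = _ := by simp only [γ]; field_simp; ring

end

theorem moment_bound_general
    (ν μ m r : ℝ) (hν : 0 < ν) (hνμ : ν < μ) (hm : m ∈ Set.Ioc (0:ℝ) 1) (hr : 1 ≤ r)
    (W : ℝ → ℝ)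
    (hWnonneg : ∀ x ∈ Set.Icc ν μ, 0 ≤ W x)
    (hWcont : ContinuousOn W (Set.Icc ν μ))
    (hWsym : ∀ x ∈ Set.Icc ν μ, W (ν + μ - x) = W x)
    (hmid : (ν + μ) / (2 * m) ∈ Set.Icc ν μ)
    (hconv : ∀ x ∈ Set.Icc ν μ, ∀ y ∈ Set.Icc ν μ, ∀ γ ∈ Set.Icc (0:ℝ) 1,
      r * (γ * x + m * (1 - γ) * y) ^ (r - 1)
        ≤ γ * (r * x ^ (r - 1)) + m * (1 - γ) * (r * y ^ (r - 1))) :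
    |(ν ^ r + μ ^ r) / 2 * (∫ x in ν..μ, W x) - ∫ t in ν..μ, t ^ r * W t|
      ≤ (μ - ν) ^ 2 / 4 * r * sSup (W '' Set.Icc ν μ) *
        ((1/3) * (ν ^ (r - 1) + μ ^ (r - 1))
          + (1/3) * m * (((ν + μ) / (2 * m)) ^ (r - 1)) ) := by
  set c := (ν + μ) / (2 * m)
  set M := sSup (W '' Icc ν μ)
  have hWM : ∀ t ∈ Icc ν μ, W t ≤ M := fun t ht =>
    le_csSup (isCompact_Icc.image_of_continuousOn hWcont).bddAbove (mem_image_of_mem W ht)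
  have hM : 0 ≤ M := (hWnonneg ν (left_mem_Icc.2 hνμ.le)).trans (hWM ν (left_mem_Icc.2 hνμ.le))
  have hpow : Continuous fun t : ℝ => t ^ r := Real.continuous_rpow_const (by linarith)
  have hderiv : Continuous fun t : ℝ => r * t ^ (r - 1) := by fun_prop (disch := linarith)
  have hgap₀ : ∀ t ∈ Icc ν μ, 0 ≤ trapezoidGap (fun t => t ^ r) ν μ t := fun t ht =>
    ((convexOn_rpow hr).subset (Icc_subset_Ici_self.trans (Ici_subset_Ici.2 hν.le))
      (convex_Icc ν μ)).trapezoidGap_nonneg ht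
  rw [mul_integral_sub_integral_mul_eq_integral_trapezoidGap_mul hνμ.le hpow.continuousOn
    hWcont hWsym]
  calc _ ≤ M * ∫ t in ν..μ, trapezoidGap (fun t => t ^ r) ν μ t :=
        abs_integral_mul_le_mul_integral hνμ.le (by unfold trapezoidGap; fun_prop) hWcont
          hgap₀ hWnonneg hWM
    _ = M * ∫ t in ν..μ, (t - (ν + μ) / 2) * (r * t ^ (r - 1)) := by
        rw [integral_trapezoidGap hνμ.le hpow.continuousOn,
          trapezoidal_error_one_eq_integral_mul_deriv
            (fun t _ => Real.hasDerivAt_rpow_const (Or.inr hr)) (hderiv.intervalIntegrable _ _)]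
    _ ≤ M * (((μ - ν) / 2) ^ 2 * (r * μ ^ (r - 1) / 3 + m * (r * c ^ (r - 1)) / 6)) := by
        gcongr
        refine integral_sub_midpoint_mul_le hνμ (hderiv.intervalIntegrable _ _)
          (fun t ht => ?_) fun t ht => MConvexOn.le_chord (g := fun t => r * t ^ (r - 1))
            hconv hνμ hm.1.ne' hmid ht
        have ht₀ : 0 ≤ t := hν.le.trans ht.1
        positivity
    _ ≤ _ := by
        have : 0 ≤ (μ - ν) ^ 2 / 4 * r * M * (ν ^ (r - 1) / 3 + m * c ^ (r - 1) / 6) := by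
          have hmc := mul_nonneg hm.1.le (Real.rpow_nonneg (hν.le.trans hmid.1) (r - 1))
          positivity
        linarith

theorem moment_bound
    (ν μ m r : ℝ) (hν : 0 < ν) (hνμ : ν < μ) (hm : m ∈ Set.Ioc (0:ℝ) 1) (hr : 1 ≤ r)
    (W : ℝ → ℝ)
    (hWnonneg : ∀ x ∈ Set.Icc ν μ, 0 ≤ W x)
    (hWcont : ContinuousOn W (Set.Icc ν μ))
    (hWsym : ∀ x ∈ Set.Icc ν μ, W (ν + μ - x) = W x)
    (hWdensity : (∫ t in ν..μ, W t) = 1)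
    (hmid : (ν + μ) / (2 * m) ∈ Set.Icc ν μ)
    (hconv : ∀ x ∈ Set.Icc ν μ, ∀ y ∈ Set.Icc ν μ, ∀ γ ∈ Set.Icc (0:ℝ) 1,
      r * (γ * x + m * (1 - γ) * y) ^ (r - 1)
        ≤ γ * (r * x ^ (r - 1)) + m * (1 - γ) * (r * y ^ (r - 1))) :
    |(ν ^ r + μ ^ r) / 2 * (∫ x in ν..μ, W x) - ∫ t in ν..μ, t ^ r * W t|
      ≤ (μ - ν) ^ 2 / 4 * r * sSup (W '' Set.Icc ν μ) *
        ((1/3) * (ν ^ (r - 1) + μ ^ (r - 1))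
          + (1/3) * m * (((ν + μ) / (2 * m)) ^ (r - 1)) ) :=
  moment_bound_general ν μ m r hν hνμ hm hr W hWnonneg hWcont hWsym hmid hconv
end
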